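/- (Gradient Bound, GB) Fix γ ∈ (0,1], λ > 0, a finite index set T, and symmetric matrices H_t ∈ ℝ^{d×d} (t ∈ T). Let M ⪰ O be any feasible solution and let M* be optimal for λ, i.e., M* ⪰ O and P_λ(M*) ≤ P_λ(M') for all M' ⪰ O. Then ‖M* − (M − (1/(2λ))∇P_λ(M))‖_F ≤ (1/(2λ))‖∇P_λ(M)‖_F. -/

import Mathlib

open scoped BigOperators
open scoped Matrix

/-- Frobenius inner product ⟨A,B⟩ = tr(Aᵀ B). -/
noncomputable def frob {d : ℕ} (A B : Matrix (Fin d) (Fin d) ℝ) : ℝ :=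
  Matrix.trace (Aᵀ * B)

/-- Frobenius norm ‖A‖_F = √⟨A,A⟩. -/
noncomputable def frobNorm {d : ℕ} (A : Matrix (Fin d) (Fin d) ℝ) : ℝ :=
  Real.sqrt (frob A A)

/-- Smoothed hinge loss ℓ_γ. -/
noncomputable def shinge (γ x : ℝ) : ℝ :=
  if 1 < x then 0 else if 1 - γ ≤ x then (1 - x) ^ 2 / (2 * γ) else 1 - x - γ / 2

/-- Derivative of the smoothed hinge loss ℓ_γ'. -/
noncomputable def shinge' (γ x : ℝ) : ℝ :=
  if 1 < x then 0 else if 1 - γ ≤ x then -(1 - x) / γ else -1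

/-- Primal objective P_λ(M) = Σ_t ℓ_γ(⟨M,H_t⟩) + (λ/2)‖M‖_F². -/
noncomputable def Pobj {d : ℕ} {ι : Type*} (γ lam : ℝ) (T : Finset ι)
    (H : ι → Matrix (Fin d) (Fin d) ℝ) (M : Matrix (Fin d) (Fin d) ℝ) : ℝ :=
  (∑ t ∈ T, shinge γ (frob M (H t))) + lam / 2 * frobNorm M ^ 2

/-- Gradient ∇P_λ(M) = Σ_t ℓ_γ'(⟨M,H_t⟩) H_t + λ M. -/
noncomputable def gradP {d : ℕ} {ι : Type*} (γ lam : ℝ) (T : Finset ι)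
    (H : ι → Matrix (Fin d) (Fin d) ℝ) (M : Matrix (Fin d) (Fin d) ℝ) :
    Matrix (Fin d) (Fin d) ℝ :=
  (∑ t ∈ T, shinge' γ (frob M (H t)) • H t) + lam • M

/-! Under the isometry `Matrix (Fin d) (Fin d) ℝ ≃ EuclideanSpace ℝ (Fin d × Fin d)` the objective
becomes `x ↦ ∑ₜ ℓ_γ ⟪x, hₜ⟫ + (λ/2)‖x‖²`, and convexity of `ℓ_γ` makes `∇P(x)` the slope of a
quadratic minorant: `P x + ⟪∇P x, y - x⟫ + (λ/2)‖y - x‖² ≤ P y`. Such minorants make `P`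
`λ`-strongly convex, so on the convex PSD cone the minimiser `M*` has quadratic growth
`P M* + (λ/2)‖M - M*‖² ≤ P M`. Adding the minorant at `y = M*` gives
`⟪∇P M, M* - M⟫ ≤ -λ‖M* - M‖²`, which is exactly the expanded square
`‖(M* - M) + ∇P M / (2λ)‖² ≤ ‖∇P M‖² / (4λ²)`. -/

open Set Filter Topology
open scoped RealInnerProductSpace

section UniformConvex

variable {E : Type*} [NormedAddCommGroup E] [NormedSpace ℝ E] {s : Set E} {f : E → ℝ} {x y : E}

theorem UniformConvexOn.add_le_of_isMinOn {φ : ℝ → ℝ} (hf : UniformConvexOn s φ f)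
    (hmin : IsMinOn f s y) (hx : x ∈ s) (hy : y ∈ s) : f y + φ ‖x - y‖ ≤ f x := by
  have hsegment : ∀ a ∈ Ioc (0 : ℝ) 1, f y ≤ f x - (1 - a) * φ ‖x - y‖ := by
    rintro a ⟨ha0, ha1⟩
    have hconv := hf.2 hx hy ha0.le (sub_nonneg.2 ha1) (add_sub_cancel a 1)
    have hmin' := isMinOn_iff.1 hmin _
      (hf.1 hx hy ha0.le (sub_nonneg.2 ha1) (add_sub_cancel a 1))
    rw [smul_eq_mul, smul_eq_mul] at hconv
    nlinarith
  have hlim : Tendsto (fun a : ℝ => f x - (1 - a) * φ ‖x - y‖) (𝓝[>] 0)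
      (𝓝 (f x - φ ‖x - y‖)) := by
    have hcont : Continuous fun a : ℝ => f x - (1 - a) * φ ‖x - y‖ := by fun_prop
    exact tendsto_nhdsWithin_of_tendsto_nhds (hcont.tendsto' 0 _ (by simp))
  have hlimit := ge_of_tendsto hlim (eventually_of_mem (Ioc_mem_nhdsGT one_pos) hsegment)
  linarith

end UniformConvex

section InnerProductSpace

variable {E : Type*} [NormedAddCommGroup E] [InnerProductSpace ℝ E] {s : Set E} {f : E → ℝ}
  {m : ℝ} {x y g : E}

theorem strongConvexOn_of_forall_add_inner_le (hs : Convex ℝ s) (grad : E → E)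
    (h : ∀ x ∈ s, ∀ y ∈ s, f x + ⟪grad x, y - x⟫ + m / 2 * ‖y - x‖ ^ 2 ≤ f y) :
    StrongConvexOn s m f := by
  refine ⟨hs, fun x hx y hy a b ha hb hab => ?_⟩
  obtain rfl := eq_sub_of_add_eq hab
  set z := (1 - b) • x + b • y
  have hz : z ∈ s := hs hx hy ha hb hab
  have hxz : x - z = b • (x - y) := by module
  have hyz : y - z = -((1 - b) • (x - y)) := by module
  have hx' := h z hz x hx
  have hy' := h z hz y hy
  rw [hxz, inner_smul_right, norm_smul, Real.norm_of_nonneg hb] at hx'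
  rw [hyz, inner_neg_right, inner_smul_right, norm_neg, norm_smul, Real.norm_of_nonneg ha] at hy'
  rw [smul_eq_mul, smul_eq_mul]
  nlinarith [mul_le_mul_of_nonneg_left hx' ha, mul_le_mul_of_nonneg_left hy' hb]

theorem StrongConvexOn.norm_sub_sub_smul_le (hf : StrongConvexOn s m f) (hm : 0 < m)
    (hmin : IsMinOn f s y) (hx : x ∈ s) (hy : y ∈ s)
    (hg : f x + ⟪g, y - x⟫ + m / 2 * ‖y - x‖ ^ 2 ≤ f y) :
    ‖y - (x - (1 / (2 * m)) • g)‖ ≤ 1 / (2 * m) * ‖g‖ := by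
  have hgrowth : f y + m / 2 * ‖x - y‖ ^ 2 ≤ f x :=
    UniformConvexOn.add_le_of_isMinOn hf hmin hx hy
  rw [norm_sub_rev] at hgrowth
  have hinner : ⟪y - x, g⟫ ≤ -(m * ‖y - x‖ ^ 2) := by
    rw [real_inner_comm]; linarith
  have hc : 2 * (1 / (2 * m)) * (m * ‖y - x‖ ^ 2) = ‖y - x‖ ^ 2 := by field_simp
  set c := 1 / (2 * m)
  have hsq : ‖y - (x - c • g)‖ ^ 2 ≤ (c * ‖g‖) ^ 2 := by
    rw [show y - (x - c • g) = (y - x) + c • g by abel, norm_add_sq_real, inner_smul_right,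
      norm_smul, Real.norm_of_nonneg (by positivity)]
    nlinarith [mul_le_mul_of_nonneg_left hinner (by positivity : 0 ≤ 2 * c)]
  exact (sq_le_sq₀ (norm_nonneg _) (by positivity)).1 hsq

end InnerProductSpace

section RegularizedLoss

variable {E ι : Type*} [NormedAddCommGroup E] [InnerProductSpace ℝ E]

noncomputable def regularizedLoss (ℓ : ℝ → ℝ) (lam : ℝ) (T : Finset ι) (h : ι → E) (x : E) :
    ℝ :=
  ∑ t ∈ T, ℓ ⟪x, h t⟫ + lam / 2 * ‖x‖ ^ 2

noncomputable def regularizedLossGrad (ℓ' : ℝ → ℝ) (lam : ℝ) (T : Finset ι) (h : ι → E)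
    (x : E) : E :=
  ∑ t ∈ T, ℓ' ⟪x, h t⟫ • h t + lam • x

variable {ℓ ℓ' : ℝ → ℝ} (lam : ℝ) (T : Finset ι) (h : ι → E)

theorem regularizedLoss_add_inner_le (hℓ : ∀ a b, ℓ a + ℓ' a * (b - a) ≤ ℓ b) (x y : E) :
    regularizedLoss ℓ lam T h x + ⟪regularizedLossGrad ℓ' lam T h x, y - x⟫
      + lam / 2 * ‖y - x‖ ^ 2 ≤ regularizedLoss ℓ lam T h y := by
  have hloss : ∑ t ∈ T, (ℓ ⟪x, h t⟫ + ℓ' ⟪x, h t⟫ * (⟪y, h t⟫ - ⟪x, h t⟫))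
      ≤ ∑ t ∈ T, ℓ ⟪y, h t⟫ :=
    Finset.sum_le_sum fun t _ => hℓ _ _
  have hinner : ⟪regularizedLossGrad ℓ' lam T h x, y - x⟫
      = ∑ t ∈ T, ℓ' ⟪x, h t⟫ * (⟪y, h t⟫ - ⟪x, h t⟫) + lam * ⟪x, y - x⟫ := by
    simp only [regularizedLossGrad, inner_add_left, sum_inner, real_inner_smul_left,
      inner_sub_right, real_inner_comm (h _)]
    simp only [mul_sub, Finset.sum_sub_distrib]
    ring
  have hnorm : ‖y‖ ^ 2 = ‖x‖ ^ 2 + 2 * ⟪x, y - x⟫ + ‖y - x‖ ^ 2 := by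
    rw [← norm_add_sq_real, add_sub_cancel]
  rw [Finset.sum_add_distrib] at hloss
  rw [regularizedLoss, regularizedLoss, hinner, hnorm]
  linarith

theorem strongConvexOn_regularizedLoss {s : Set E} (hs : Convex ℝ s)
    (hℓ : ∀ a b, ℓ a + ℓ' a * (b - a) ≤ ℓ b) :
    StrongConvexOn s lam (regularizedLoss ℓ lam T h) :=
  strongConvexOn_of_forall_add_inner_le hs (regularizedLossGrad ℓ' lam T h)
    fun x _ y _ => regularizedLoss_add_inner_le lam T h hℓ x y

end RegularizedLoss

theorem shinge_add_mul_sub_le {γ : ℝ} (hγ : 0 < γ) (a b : ℝ) :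
    shinge γ a + shinge' γ a * (b - a) ≤ shinge γ b := by
  have hquad : (1 - a) ^ 2 / (2 * γ) + -(1 - a) / γ * (b - a)
      = ((1 - a) ^ 2 - 2 * (1 - a) * (b - a)) / (2 * γ) := by field_simp; ring
  unfold shinge shinge'
  split_ifs with ha₁ hb₁ hb₂ ha₂ hb₁ hb₂ hb₁ hb₂
  · norm_num
  · simp only [zero_mul, add_zero]
    positivity
  · push Not at hb₂; nlinarith
  · rw [hquad]
    apply div_nonpos_of_nonpos_of_nonneg _ (by positivity)
    push Not at ha₁
    nlinarith
  · rw [hquad, div_le_div_iff_of_pos_right (by positivity)]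
    nlinarith [sq_nonneg (a - b)]
  · rw [hquad, div_le_iff₀ (by positivity)]
    push Not at ha₁ hb₂
    nlinarith [mul_nonneg (by linarith : (0:ℝ) ≤ γ - (1 - a))
      (by nlinarith : (0:ℝ) ≤ 2 * (1 - b) - γ - (1 - a))]
  · linarith
  · rw [le_div_iff₀ (by positivity)]
    nlinarith [sq_nonneg (γ - (1 - b))]
  · linarith

open scoped ComplexOrder in
theorem Matrix.convex_setOf_posSemidef {n 𝕜 : Type*} [Fintype n] [RCLike 𝕜] :
    Convex ℝ {A : Matrix n n 𝕜 | A.PosSemidef} :=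
  fun _ hA _ hB _ _ ha hb _ => (hA.smul ha).add (hB.smul hb)

noncomputable def frobEquiv {m n : Type*} [Fintype m] [Fintype n] :
    Matrix m n ℝ ≃ₗ[ℝ] EuclideanSpace ℝ (m × n) :=
  (LinearEquiv.curry ℝ ℝ m n).symm.trans (WithLp.linearEquiv 2 ℝ (m × n → ℝ)).symm

theorem frobEquiv_apply {m n : Type*} [Fintype m] [Fintype n] (A : Matrix m n ℝ) (p : m × n) :
    frobEquiv A p = A p.1 p.2 :=
  rfl

section Frobenius

variable {d : ℕ}

theorem frob_eq_inner (A B : Matrix (Fin d) (Fin d) ℝ) :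
    frob A B = ⟪frobEquiv A, frobEquiv B⟫ := by
  simp only [frob, Matrix.trace, Matrix.diag_apply, Matrix.mul_apply, Matrix.transpose_apply,
    PiLp.inner_apply, frobEquiv_apply, RCLike.inner_apply, Real.ringHom_apply, mul_comm,
    Fintype.sum_prod_type]
  exact Finset.sum_comm

theorem frobNorm_eq_norm (A : Matrix (Fin d) (Fin d) ℝ) : frobNorm A = ‖frobEquiv A‖ := by
  rw [frobNorm, frob_eq_inner, norm_eq_sqrt_real_inner]

variable {ι : Type*} (γ lam : ℝ) (T : Finset ι) (H : ι → Matrix (Fin d) (Fin d) ℝ)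
  (M : Matrix (Fin d) (Fin d) ℝ)

theorem Pobj_eq_regularizedLoss :
    Pobj γ lam T H M = regularizedLoss (shinge γ) lam T (frobEquiv ∘ H) (frobEquiv M) := by
  simp only [Pobj, regularizedLoss, frob_eq_inner, frobNorm_eq_norm, Function.comp_apply]

theorem frobEquiv_gradP :
    frobEquiv (gradP γ lam T H M)
      = regularizedLossGrad (shinge' γ) lam T (frobEquiv ∘ H) (frobEquiv M) := by
  simp only [gradP, regularizedLossGrad, map_add, map_sum, map_smul, frob_eq_inner,
    Function.comp_apply]

end Frobenius

theorem gradient_bound {d : ℕ} {ι : Type*} (γ lam : ℝ)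
    (hγ : 0 < γ) (hlam : 0 < lam)
    (T : Finset ι) (H : ι → Matrix (Fin d) (Fin d) ℝ)
    (M Mstar : Matrix (Fin d) (Fin d) ℝ)
    (hM : M.PosSemidef) (hMstar : Mstar.PosSemidef)
    (hopt : ∀ M' : Matrix (Fin d) (Fin d) ℝ, M'.PosSemidef →
      Pobj γ lam T H Mstar ≤ Pobj γ lam T H M') :
    frobNorm (Mstar - (M - (1 / (2 * lam)) • gradP γ lam T H M)) ≤
      (1 / (2 * lam)) * frobNorm (gradP γ lam T H M) := by
  set psd := frobEquiv '' {A : Matrix (Fin d) (Fin d) ℝ | A.PosSemidef}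
  set P := regularizedLoss (shinge γ) lam T (frobEquiv ∘ H)
  have hconvex : Convex ℝ psd :=
    Matrix.convex_setOf_posSemidef.linear_image frobEquiv.toLinearMap
  have hmin : IsMinOn P psd (frobEquiv Mstar) := by
    rintro _ ⟨M', hM', rfl⟩
    simpa only [Set.mem_ofPred_eq, Pobj_eq_regularizedLoss] using hopt M' hM'
  have hstrong : StrongConvexOn psd lam P :=
    strongConvexOn_regularizedLoss lam T _ hconvex (shinge_add_mul_sub_le hγ)
  rw [frobNorm_eq_norm, frobNorm_eq_norm, map_sub, map_sub, map_smul, frobEquiv_gradP]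
  exact hstrong.norm_sub_sub_smul_le hlam hmin ⟨M, hM, rfl⟩ ⟨Mstar, hMstar, rfl⟩
    (regularizedLoss_add_inner_le lam T _ (shinge_add_mul_sub_le hγ) _ _)
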